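/- arXiv:2506.00563 — 4 statements merged into one kernel-verified Lean document; each statement's English description precedes it below -/
import Mathlib

section
/- Let d⁽⁰⁾ ≡ 0 on X × X and d⁽ⁿ⁺¹⁾ = F(d⁽ⁿ⁾) where F is the bisimulation operator of an EX-BMDP. Then for every n ∈ ℕ and every pair x, x₊ with φ*(x) = φ*(x₊), one has d⁽ⁿ⁾(x, x₊) = 0. -/
/-!
Every iterate is nonnegative, so it suffices to show inductively that `W1 (d n)` vanishes between
the transition distributions of two observations `x`, `xp` with the same task-relevant state `s`.
Both are mixtures over the next task state `s'` with the same weights `ps s a s'`; they differ only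
through the independent noise transition. Drawing `s'` once and then the two next observations
independently gives a coupling supported on pairs of observations with task-relevant state `s'`,
where `d n` vanishes by induction, so this coupling has cost `0`.
-/

/-- The 1-Wasserstein distance between two distributions on a finite type,
as an infimum over couplings. -/
noncomputable def W1 {X : Type*} [Fintype X] (d : X → X → ℝ) (P Q : X → ℝ) : ℝ :=
  sInf {c : ℝ | ∃ μ : X → X → ℝ, (∀ x y, 0 ≤ μ x y) ∧
    (∀ x, ∑ y, μ x y = P x) ∧ (∀ y, ∑ x, μ x y = Q y) ∧
    c = ∑ x, ∑ y, d x y * μ x y}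

open Finset

section Wasserstein

variable {X : Type*} [Fintype X] {d : X → X → ℝ} {P Q : X → ℝ} {μ : X → X → ℝ}

lemma W1_nonneg (hd : ∀ x y, 0 ≤ d x y) : 0 ≤ W1 d P Q := by
  apply Real.sInf_nonneg
  rintro c ⟨μ, hμ0, -, -, rfl⟩
  exact sum_nonneg fun x _ => sum_nonneg fun y _ => mul_nonneg (hd x y) (hμ0 x y)

lemma W1_le_of_coupling (hd : ∀ x y, 0 ≤ d x y) (hμ0 : ∀ x y, 0 ≤ μ x y)
    (hP : ∀ x, ∑ y, μ x y = P x) (hQ : ∀ y, ∑ x, μ x y = Q y) :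
    W1 d P Q ≤ ∑ x, ∑ y, d x y * μ x y := by
  refine csInf_le ⟨0, ?_⟩ ⟨μ, hμ0, hP, hQ, rfl⟩
  rintro c ⟨ν, hν0, -, -, rfl⟩
  exact sum_nonneg fun x _ => sum_nonneg fun y _ => mul_nonneg (hd x y) (hν0 x y)

lemma W1_eq_zero_of_coupling (hd : ∀ x y, 0 ≤ d x y) (hμ0 : ∀ x y, 0 ≤ μ x y)
    (hP : ∀ x, ∑ y, μ x y = P x) (hQ : ∀ y, ∑ x, μ x y = Q y)
    (hsupp : ∀ x y, μ x y ≠ 0 → d x y = 0) : W1 d P Q = 0 := by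
  refine le_antisymm ?_ (W1_nonneg hd)
  calc W1 d P Q ≤ ∑ x, ∑ y, d x y * μ x y := W1_le_of_coupling hd hμ0 hP hQ
    _ = 0 := sum_eq_zero fun x _ => sum_eq_zero fun y _ => by
        by_cases hxy : μ x y = 0
        · rw [hxy, mul_zero]
        · rw [hsupp x y hxy, zero_mul]

end Wasserstein

section MixtureCoupling

variable {S X : Type*} [Fintype S] (w : S → ℝ) (K L : S → X → ℝ)

def sharedMixtureCoupling (y y' : X) : ℝ := ∑ s, w s * K s y * L s y'

variable {w K L}

lemma sharedMixtureCoupling_nonneg (hw : ∀ s, 0 ≤ w s) (hK : ∀ s y, 0 ≤ K s y)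
    (hL : ∀ s y, 0 ≤ L s y) (y y' : X) : 0 ≤ sharedMixtureCoupling w K L y y' :=
  sum_nonneg fun s _ => mul_nonneg (mul_nonneg (hw s) (hK s y)) (hL s y')

lemma sum_sharedMixtureCoupling_right [Fintype X] (hL : ∀ s, ∑ y', L s y' = 1) (y : X) :
    ∑ y', sharedMixtureCoupling w K L y y' = ∑ s, w s * K s y := by
  simp only [sharedMixtureCoupling]
  rw [sum_comm]
  simp only [← mul_sum, hL, mul_one]

lemma sum_sharedMixtureCoupling_left [Fintype X] (hK : ∀ s, ∑ y, K s y = 1) (y' : X) :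
    ∑ y, sharedMixtureCoupling w K L y y' = ∑ s, w s * L s y' := by
  simp only [sharedMixtureCoupling]
  rw [sum_comm]
  simp only [← sum_mul, ← mul_sum, hK, mul_one]

lemma exists_of_sharedMixtureCoupling_ne_zero {y y' : X}
    (h : sharedMixtureCoupling w K L y y' ≠ 0) : ∃ s, K s y ≠ 0 ∧ L s y' ≠ 0 := by
  obtain ⟨s, -, hs⟩ := exists_ne_zero_of_sum_ne_zero h
  exact ⟨s, fun hK => hs (by rw [hK, mul_zero, zero_mul]),
    fun hL => hs (by rw [hL, mul_zero])⟩

theorem W1_mixture_eq_zero [Fintype X] {d : X → X → ℝ} (f : X → S) (hd : ∀ y y', 0 ≤ d y y')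
    (hdf : ∀ y y', f y = f y' → d y y' = 0) (hw : ∀ s, 0 ≤ w s)
    (hK0 : ∀ s y, 0 ≤ K s y) (hK1 : ∀ s, ∑ y, K s y = 1) (hKf : ∀ s y, K s y ≠ 0 → f y = s)
    (hL0 : ∀ s y, 0 ≤ L s y) (hL1 : ∀ s, ∑ y, L s y = 1) (hLf : ∀ s y, L s y ≠ 0 → f y = s) :
    W1 d (fun y => ∑ s, w s * K s y) (fun y => ∑ s, w s * L s y) = 0 := by
  refine W1_eq_zero_of_coupling hd (sharedMixtureCoupling_nonneg hw hK0 hL0)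
    (sum_sharedMixtureCoupling_right hL1) (sum_sharedMixtureCoupling_left hK1)
    fun y y' h => hdf y y' ?_
  obtain ⟨s, hKs, hLs⟩ := exists_of_sharedMixtureCoupling_ne_zero h
  rw [hKf s y hKs, hLf s y' hLs]

end MixtureCoupling

section NoisyEmission

variable {S Ξ X : Type*} [Fintype Ξ] {pξ : Ξ → Ξ → ℝ} {q : S → Ξ → X → ℝ}

/-- The law of the next observation given the current noise `ξ` and the next task state `s'`. -/
def noisyEmission (pξ : Ξ → Ξ → ℝ) (q : S → Ξ → X → ℝ) (ξ : Ξ) (s' : S) (y : X) : ℝ :=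
  ∑ ξ', pξ ξ ξ' * q s' ξ' y

lemma noisyEmission_nonneg (hpξ0 : ∀ ξ ξ', 0 ≤ pξ ξ ξ') (hq0 : ∀ s ξ x, 0 ≤ q s ξ x)
    (ξ : Ξ) (s' : S) (y : X) : 0 ≤ noisyEmission pξ q ξ s' y :=
  sum_nonneg fun ξ' _ => mul_nonneg (hpξ0 ξ ξ') (hq0 s' ξ' y)

lemma sum_noisyEmission [Fintype X] (hpξ1 : ∀ ξ, ∑ ξ', pξ ξ ξ' = 1)
    (hq1 : ∀ s ξ, ∑ x, q s ξ x = 1)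
    (ξ : Ξ) (s' : S) : ∑ y, noisyEmission pξ q ξ s' y = 1 := by
  simp only [noisyEmission]
  rw [sum_comm]
  simp only [← mul_sum, hq1, mul_one, hpξ1]

lemma fst_enc_of_noisyEmission_ne_zero (enc : X → S × Ξ) (hq0 : ∀ s ξ x, 0 ≤ q s ξ x)
    (hblock : ∀ s ξ x, 0 < q s ξ x → enc x = (s, ξ)) {ξ : Ξ} {s' : S} {y : X}
    (h : noisyEmission pξ q ξ s' y ≠ 0) : (enc y).1 = s' := by
  obtain ⟨ξ', -, hξ'⟩ := exists_ne_zero_of_sum_ne_zero h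
  have hq : 0 < q s' ξ' y := (hq0 s' ξ' y).lt_of_ne fun h0 => hξ' (by rw [← h0, mul_zero])
  rw [hblock s' ξ' y hq]

end NoisyEmission

theorem bisimulation_iterates_denoising_general
    {S Ξ X A : Type*} [Fintype S] [Fintype Ξ] [Fintype X] [Fintype A]
    (ps : S → A → S → ℝ) (pξ : Ξ → Ξ → ℝ) (q : S → Ξ → X → ℝ) (R : S → A → ℝ)
    (enc : X → S × Ξ)
    (hps0 : ∀ s a s', 0 ≤ ps s a s')
    (hpξ0 : ∀ ξ ξ', 0 ≤ pξ ξ ξ') (hpξ1 : ∀ ξ, ∑ ξ', pξ ξ ξ' = 1)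
    (hq0 : ∀ s ξ x, 0 ≤ q s ξ x) (hq1 : ∀ s ξ, ∑ x, q s ξ x = 1)
    (hblock : ∀ s ξ x, 0 < q s ξ x → enc x = (s, ξ))
    (cR cT : ℝ) (hcR : 0 ≤ cR) (hcT0 : 0 ≤ cT)
    (Rg : X → A → ℝ) (hRg : ∀ x a, Rg x a = R (enc x).1 a)
    (Pg : X → A → X → ℝ)
    (hPg : ∀ x a x', Pg x a x' =
      ∑ s', ∑ ξ', ps (enc x).1 a s' * pξ (enc x).2 ξ' * q s' ξ' x')
    -- the sequence of iterates d⁽ⁿ⁾ of the bisimulation operator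
    (d : ℕ → X → X → ℝ)
    (h0 : ∀ x y, d 0 x y = 0)
    (hsucc : ∀ n x₁ x₂, d (n + 1) x₁ x₂ =
      ⨆ a : A, (cR * |Rg x₁ a - Rg x₂ a| + cT * W1 (d n) (Pg x₁ a) (Pg x₂ a))) :
    ∀ n : ℕ, ∀ x xp : X, (enc x).1 = (enc xp).1 → d n x xp = 0 := by
  have hPg_mixture : ∀ x a, Pg x a = fun y => ∑ s', ps (enc x).1 a s' *
      noisyEmission pξ q (enc x).2 s' y := fun x a => funext fun y => by
    simp only [hPg, noisyEmission, mul_sum, mul_assoc]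
  have hW1 : ∀ n, (∀ y y', 0 ≤ d n y y') → (∀ y y', (enc y).1 = (enc y').1 → d n y y' = 0) →
      ∀ x xp a, (enc x).1 = (enc xp).1 → W1 (d n) (Pg x a) (Pg xp a) = 0 := by
    intro n hd hdf x xp a hx
    rw [hPg_mixture, hPg_mixture, ← hx]
    exact W1_mixture_eq_zero (Prod.fst ∘ enc) hd hdf (hps0 _ a)
      (noisyEmission_nonneg hpξ0 hq0 _) (sum_noisyEmission hpξ1 hq1 _)
      (fun _ _ => fst_enc_of_noisyEmission_ne_zero enc hq0 hblock)
      (noisyEmission_nonneg hpξ0 hq0 _) (sum_noisyEmission hpξ1 hq1 _)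
      (fun _ _ => fst_enc_of_noisyEmission_ne_zero enc hq0 hblock)
  suffices H : ∀ n, (∀ y y', 0 ≤ d n y y') ∧ ∀ y y', (enc y).1 = (enc y').1 → d n y y' = 0 from
    fun n => (H n).2
  intro n
  induction n with
  | zero => exact ⟨fun y y' => (h0 y y').ge, fun y y' _ => h0 y y'⟩
  | succ n ih =>
    refine ⟨fun y y' => ?_, fun x xp hx => ?_⟩
    · rw [hsucc]
      exact Real.iSup_nonneg fun a => add_nonneg (mul_nonneg hcR (abs_nonneg _))
        (mul_nonneg hcT0 (W1_nonneg ih.1))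
    · simp only [hsucc, hRg, hx, sub_self, abs_zero, mul_zero, zero_add,
        hW1 n ih.1 ih.2 x xp _ hx, Real.iSup_const_zero]

/-- every iterate of the bisimulation operator of an EX-BMDP,
starting from the zero function, vanishes on pairs of observations sharing the
same task-relevant state. -/
theorem bisimulation_iterates_denoising
    {S Ξ X A : Type*} [Fintype S] [Fintype Ξ] [Fintype X] [Fintype A] [Nonempty A]
    (ps : S → A → S → ℝ) (pξ : Ξ → Ξ → ℝ) (q : S → Ξ → X → ℝ) (R : S → A → ℝ)
    (enc : X → S × Ξ)
    (hps0 : ∀ s a s', 0 ≤ ps s a s') (hps1 : ∀ s a, ∑ s', ps s a s' = 1)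
    (hpξ0 : ∀ ξ ξ', 0 ≤ pξ ξ ξ') (hpξ1 : ∀ ξ, ∑ ξ', pξ ξ ξ' = 1)
    (hq0 : ∀ s ξ x, 0 ≤ q s ξ x) (hq1 : ∀ s ξ, ∑ x, q s ξ x = 1)
    (hblock : ∀ s ξ x, 0 < q s ξ x → enc x = (s, ξ))
    (cR cT : ℝ) (hcR : 0 ≤ cR) (hcT0 : 0 ≤ cT) (hcT1 : cT < 1)
    (Rg : X → A → ℝ) (hRg : ∀ x a, Rg x a = R (enc x).1 a)
    (Pg : X → A → X → ℝ)
    (hPg : ∀ x a x', Pg x a x' =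
      ∑ s', ∑ ξ', ps (enc x).1 a s' * pξ (enc x).2 ξ' * q s' ξ' x')
    -- the sequence of iterates d⁽ⁿ⁾ of the bisimulation operator
    (d : ℕ → X → X → ℝ)
    (h0 : ∀ x y, d 0 x y = 0)
    (hsucc : ∀ n x₁ x₂, d (n + 1) x₁ x₂ =
      ⨆ a : A, (cR * |Rg x₁ a - Rg x₂ a| + cT * W1 (d n) (Pg x₁ a) (Pg x₂ a))) :
    ∀ n : ℕ, ∀ x xp : X, (enc x).1 = (enc xp).1 → d n x xp = 0 :=
  bisimulation_iterates_denoising_general ps pξ q R enc hps0 hpξ0 hpξ1 hq0 hq1 hblock cR cT hcR hcT0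
    Rg hRg Pg hPg d h0 hsucc
end

section
/- In an EX-BMDP with a finite observation space, if π is an exo-free policy (π(a|x) = π(a|x₊) whenever φ*(x) = φ*(x₊)), then the policy-dependent bisimulation metric dᵖⁱ, defined as the unique fixed point of d ↦ c_R·|Rᵖⁱ(x₁) − Rᵖⁱ(x₂)| + c_T·W₁(d)(Pᵖⁱ(·|x₁), Pᵖⁱ(·|x₂)) with 0 ≤ c_T < 1, satisfies dᵖⁱ(x, x₊) = 0 for all x, x₊ with φ*(x) = φ*(x₊). -/
/-!
Call two observations twins when they have the same task-relevant state. For twins `x`, `x₊`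
the exo-free policy picks the same action distribution, so the rewards agree, and drawing the
next task-relevant state once and then the two noise components independently couples
`Pᵖⁱ(·|x)` with `Pᵖⁱ(·|x₊)` through twin pairs only. Hence if `M` is the largest value of `dᵖⁱ`
on twins, then `dᵖⁱ ≤ c_T · M` on twins, so `M ≤ c_T · M` and `M = 0`.
-/

open Finset

section Coupling

variable {X : Type*} [Fintype X]

structure IsCouplingOn (r : X → X → Prop) (μ : X → X → ℝ) (P Q : X → ℝ) : Prop where
  nonneg : ∀ x y, 0 ≤ μ x y
  sum_right : ∀ x, ∑ y, μ x y = P x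
  sum_left : ∀ y, ∑ x, μ x y = Q y
  rel_of_ne_zero : ∀ x y, μ x y ≠ 0 → r x y

theorem sum_weighted_sum_eq_one {ι : Type*} [Fintype ι] {w : ι → ℝ} {P : ι → X → ℝ}
    (hw : ∑ i, w i = 1) (hP : ∀ i, ∑ x, P i x = 1) : ∑ x, ∑ i, w i * P i x = 1 := by
  rw [sum_comm]
  simp only [← mul_sum, hP, mul_one, hw]

theorem isCouplingOn_mul {r : X → X → Prop} {P Q : X → ℝ} (hP0 : ∀ x, 0 ≤ P x)
    (hQ0 : ∀ y, 0 ≤ Q y) (hP1 : ∑ x, P x = 1) (hQ1 : ∑ y, Q y = 1)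
    (hr : ∀ x y, P x ≠ 0 → Q y ≠ 0 → r x y) :
    IsCouplingOn r (fun x y => P x * Q y) P Q where
  nonneg x y := mul_nonneg (hP0 x) (hQ0 y)
  sum_right x := by rw [← mul_sum, hQ1, mul_one]
  sum_left y := by rw [← sum_mul, hP1, one_mul]
  rel_of_ne_zero x y h := hr x y (left_ne_zero_of_mul h) (right_ne_zero_of_mul h)

theorem IsCouplingOn.weighted_sum {ι : Type*} [Fintype ι] {r : X → X → Prop} {w : ι → ℝ}
    (hw : ∀ i, 0 ≤ w i) {μ : ι → X → X → ℝ} {P Q : ι → X → ℝ}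
    (h : ∀ i, IsCouplingOn r (μ i) (P i) (Q i)) :
    IsCouplingOn r (fun x y => ∑ i, w i * μ i x y) (fun x => ∑ i, w i * P i x)
      (fun y => ∑ i, w i * Q i y) where
  nonneg x y := sum_nonneg fun i _ => mul_nonneg (hw i) ((h i).nonneg x y)
  sum_right x := by
    rw [sum_comm]
    simp only [← mul_sum, (h _).sum_right]
  sum_left y := by
    rw [sum_comm]
    simp only [← mul_sum, (h _).sum_left]
  rel_of_ne_zero x y hne := by
    obtain ⟨i, -, hi⟩ := exists_ne_zero_of_sum_ne_zero hne
    exact (h i).rel_of_ne_zero x y (right_ne_zero_of_mul hi)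

theorem W1_le_of_isCouplingOn {d : X → X → ℝ} (hd : ∀ x y, 0 ≤ d x y) {r : X → X → Prop}
    {M : ℝ} (hdM : ∀ x y, r x y → d x y ≤ M) {μ : X → X → ℝ} {P Q : X → ℝ}
    (hμ : IsCouplingOn r μ P Q) (hP : ∑ x, P x = 1) : W1 d P Q ≤ M := by
  have hbdd : BddBelow {c : ℝ | ∃ ν : X → X → ℝ, (∀ x y, 0 ≤ ν x y) ∧
      (∀ x, ∑ y, ν x y = P x) ∧ (∀ y, ∑ x, ν x y = Q y) ∧
      c = ∑ x, ∑ y, d x y * ν x y} := by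
    refine ⟨0, ?_⟩
    rintro _ ⟨ν, hν0, -, -, rfl⟩
    exact sum_nonneg fun x _ => sum_nonneg fun y _ => mul_nonneg (hd x y) (hν0 x y)
  have hcost : ∑ x, ∑ y, d x y * μ x y ≤ M := calc
    ∑ x, ∑ y, d x y * μ x y ≤ ∑ x, ∑ y, M * μ x y := by
      refine sum_le_sum fun x _ => sum_le_sum fun y _ => ?_
      by_cases h : μ x y = 0
      · simp only [h, mul_zero, le_refl]
      · exact mul_le_mul_of_nonneg_right (hdM x y (hμ.rel_of_ne_zero x y h)) (hμ.nonneg x y)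
    _ = M := by simp only [← mul_sum, hμ.sum_right, hP, mul_one]
  exact (csInf_le hbdd ⟨μ, hμ.nonneg, hμ.sum_right, hμ.sum_left, rfl⟩).trans hcost

end Coupling

theorem eq_zero_of_rel_of_contracting {X : Type*} [Fintype X] {r : X → X → Prop}
    {d : X → X → ℝ} (hd : ∀ x y, 0 ≤ d x y) {c : ℝ} (hc : c < 1)
    (hcontr : ∀ M, (∀ x y, r x y → d x y ≤ M) → ∀ x y, r x y → d x y ≤ c * M) :
    ∀ x y, r x y → d x y = 0 := by
  classical
  intro x y hxy
  obtain ⟨p, hp, hmax⟩ := exists_max_image (univ.filter fun p : X × X => r p.1 p.2)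
    (fun p => d p.1 p.2) ⟨(x, y), by simpa using hxy⟩
  have hle : ∀ x y, r x y → d x y ≤ d p.1 p.2 := fun x y h => hmax (x, y) (by simpa using h)
  have hself : d p.1 p.2 ≤ c * d p.1 p.2 := hcontr _ hle p.1 p.2 (by simpa using hp)
  have hM : d p.1 p.2 ≤ 0 := by nlinarith [hd p.1 p.2]
  linarith [hle x y hxy, hd x y]

section ExBMDP

variable {S Ξ X : Type*} [Fintype Ξ]

-- The law of the next observation, given the current noise `ξ` and the next task-relevant state `s`.
def emission (pξ : Ξ → Ξ → ℝ) (q : S → Ξ → X → ℝ) (ξ : Ξ) (s : S) (x : X) : ℝ :=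
  ∑ ξ', pξ ξ ξ' * q s ξ' x

variable {pξ : Ξ → Ξ → ℝ} {q : S → Ξ → X → ℝ}

theorem emission_nonneg (hpξ0 : ∀ ξ ξ', 0 ≤ pξ ξ ξ') (hq0 : ∀ s ξ x, 0 ≤ q s ξ x)
    (ξ : Ξ) (s : S) (x : X) : 0 ≤ emission pξ q ξ s x :=
  sum_nonneg fun ξ' _ => mul_nonneg (hpξ0 ξ ξ') (hq0 s ξ' x)

theorem sum_emission [Fintype X] (hpξ1 : ∀ ξ, ∑ ξ', pξ ξ ξ' = 1) (hq1 : ∀ s ξ, ∑ x, q s ξ x = 1)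
    (ξ : Ξ) (s : S) : ∑ x, emission pξ q ξ s x = 1 :=
  sum_weighted_sum_eq_one (hpξ1 ξ) (hq1 s)

theorem fst_eq_of_emission_ne_zero {enc : X → S × Ξ} (hq0 : ∀ s ξ x, 0 ≤ q s ξ x)
    (hblock : ∀ s ξ x, 0 < q s ξ x → enc x = (s, ξ)) {ξ : Ξ} {s : S} {x : X}
    (h : emission pξ q ξ s x ≠ 0) : (enc x).1 = s := by
  obtain ⟨ξ', -, hξ'⟩ := exists_ne_zero_of_sum_ne_zero h
  have hpos : 0 < q s ξ' x := (hq0 s ξ' x).lt_of_ne' (right_ne_zero_of_mul hξ')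
  simp [hblock s ξ' x hpos]

theorem isCouplingOn_sum_emission [Fintype S] [Fintype X] {enc : X → S × Ξ}
    (hpξ0 : ∀ ξ ξ', 0 ≤ pξ ξ ξ') (hpξ1 : ∀ ξ, ∑ ξ', pξ ξ ξ' = 1)
    (hq0 : ∀ s ξ x, 0 ≤ q s ξ x) (hq1 : ∀ s ξ, ∑ x, q s ξ x = 1)
    (hblock : ∀ s ξ x, 0 < q s ξ x → enc x = (s, ξ)) {w : S → ℝ} (hw : ∀ s, 0 ≤ w s)
    (ξ₁ ξ₂ : Ξ) :
    IsCouplingOn (fun x y => (enc x).1 = (enc y).1)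
      (fun x y => ∑ s, w s * (emission pξ q ξ₁ s x * emission pξ q ξ₂ s y))
      (fun x => ∑ s, w s * emission pξ q ξ₁ s x) (fun y => ∑ s, w s * emission pξ q ξ₂ s y) :=
  IsCouplingOn.weighted_sum hw fun s =>
    isCouplingOn_mul (emission_nonneg hpξ0 hq0 ξ₁ s) (emission_nonneg hpξ0 hq0 ξ₂ s)
      (sum_emission hpξ1 hq1 ξ₁ s) (sum_emission hpξ1 hq1 ξ₂ s) fun _ _ hx hy =>
      (fst_eq_of_emission_ne_zero hq0 hblock hx).trans
        (fst_eq_of_emission_ne_zero hq0 hblock hy).symm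

end ExBMDP

theorem pbsm_exo_free_denoising_general
    {S Ξ X A : Type*} [Fintype S] [Fintype Ξ] [Fintype X] [Fintype A]
    (ps : S → A → S → ℝ) (pξ : Ξ → Ξ → ℝ) (q : S → Ξ → X → ℝ) (R : S → A → ℝ)
    (enc : X → S × Ξ)
    (hps0 : ∀ s a s', 0 ≤ ps s a s') (hps1 : ∀ s a, ∑ s', ps s a s' = 1)
    (hpξ0 : ∀ ξ ξ', 0 ≤ pξ ξ ξ') (hpξ1 : ∀ ξ, ∑ ξ', pξ ξ ξ' = 1)
    (hq0 : ∀ s ξ x, 0 ≤ q s ξ x) (hq1 : ∀ s ξ, ∑ x, q s ξ x = 1)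
    (hblock : ∀ s ξ x, 0 < q s ξ x → enc x = (s, ξ))
    (cR cT : ℝ) (hcT0 : 0 ≤ cT) (hcT1 : cT < 1)
    (Rg : X → A → ℝ) (hRg : ∀ x a, Rg x a = R (enc x).1 a)
    (Pg : X → A → X → ℝ)
    (hPg : ∀ x a x', Pg x a x' =
      ∑ s', ∑ ξ', ps (enc x).1 a s' * pξ (enc x).2 ξ' * q s' ξ' x')
    -- the policy, assumed to be a probability over actions and exo-free
    (π : X → A → ℝ)
    (hπ0 : ∀ x a, 0 ≤ π x a) (hπ1 : ∀ x, ∑ a, π x a = 1)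
    (hexofree : ∀ x xp : X, (enc x).1 = (enc xp).1 → ∀ a, π x a = π xp a)
    -- policy-averaged reward and transition
    (Rπ : X → ℝ) (hRπ : ∀ x, Rπ x = ∑ a, π x a * Rg x a)
    (Pπ : X → X → ℝ) (hPπ : ∀ x x', Pπ x x' = ∑ a, π x a * Pg x a x')
    -- the PBSM: nonnegative fixed point of the policy-dependent operator
    (dpi : X → X → ℝ)
    (hnonneg : ∀ x y, 0 ≤ dpi x y)
    (hfix : ∀ x₁ x₂ : X, dpi x₁ x₂ =
      cR * |Rπ x₁ - Rπ x₂| + cT * W1 dpi (Pπ x₁) (Pπ x₂)) :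
    ∀ x xp : X, (enc x).1 = (enc xp).1 → dpi x xp = 0 := by
  have hPπ_eq : ∀ x, Pπ x = fun x' => ∑ a, π x a * ∑ s', ps (enc x).1 a s' *
      emission pξ q (enc x).2 s' x' := fun x => funext fun x' => by
    simp only [hPπ, hPg, emission, mul_sum, mul_assoc]
  have hmass : ∀ x, ∑ x', Pπ x x' = 1 := fun x => by
    rw [hPπ_eq]
    exact sum_weighted_sum_eq_one (hπ1 x) fun a =>
      sum_weighted_sum_eq_one (hps1 _ a) (sum_emission hpξ1 hq1 _)
  refine eq_zero_of_rel_of_contracting hnonneg hcT1 fun M hM y yp h => ?_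
  have hπ : π yp = π y := funext fun a => (hexofree y yp h a).symm
  have hR : Rπ y = Rπ yp := by simp only [hRπ, hRg, h, hπ]
  obtain ⟨μ, hμ⟩ : ∃ μ, IsCouplingOn (fun x y => (enc x).1 = (enc y).1) μ (Pπ y) (Pπ yp) := by
    rw [hPπ_eq, hPπ_eq, hπ, h]
    exact ⟨_, IsCouplingOn.weighted_sum (hπ0 y) fun a =>
      isCouplingOn_sum_emission hpξ0 hpξ1 hq0 hq1 hblock (hps0 _ a) _ _⟩
  calc dpi y yp = cT * W1 dpi (Pπ y) (Pπ yp) := by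
        rw [hfix, hR, sub_self, abs_zero, mul_zero, zero_add]
    _ ≤ cT * M := mul_le_mul_of_nonneg_left (W1_le_of_isCouplingOn hnonneg hM hμ (hmass y)) hcT0

/-- in an EX-BMDP, the policy-dependent bisimulation metric of an
exo-free policy vanishes on pairs of observations sharing the same
task-relevant state. -/
theorem pbsm_exo_free_denoising
    {S Ξ X A : Type*} [Fintype S] [Fintype Ξ] [Fintype X] [Fintype A] [Nonempty A]
    (ps : S → A → S → ℝ) (pξ : Ξ → Ξ → ℝ) (q : S → Ξ → X → ℝ) (R : S → A → ℝ)
    (enc : X → S × Ξ)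
    (hps0 : ∀ s a s', 0 ≤ ps s a s') (hps1 : ∀ s a, ∑ s', ps s a s' = 1)
    (hpξ0 : ∀ ξ ξ', 0 ≤ pξ ξ ξ') (hpξ1 : ∀ ξ, ∑ ξ', pξ ξ ξ' = 1)
    (hq0 : ∀ s ξ x, 0 ≤ q s ξ x) (hq1 : ∀ s ξ, ∑ x, q s ξ x = 1)
    (hblock : ∀ s ξ x, 0 < q s ξ x → enc x = (s, ξ))
    (cR cT : ℝ) (hcR : 0 ≤ cR) (hcT0 : 0 ≤ cT) (hcT1 : cT < 1)
    (Rg : X → A → ℝ) (hRg : ∀ x a, Rg x a = R (enc x).1 a)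
    (Pg : X → A → X → ℝ)
    (hPg : ∀ x a x', Pg x a x' =
      ∑ s', ∑ ξ', ps (enc x).1 a s' * pξ (enc x).2 ξ' * q s' ξ' x')
    -- the policy, assumed to be a probability over actions and exo-free
    (π : X → A → ℝ)
    (hπ0 : ∀ x a, 0 ≤ π x a) (hπ1 : ∀ x, ∑ a, π x a = 1)
    (hexofree : ∀ x xp : X, (enc x).1 = (enc xp).1 → ∀ a, π x a = π xp a)
    -- policy-averaged reward and transition
    (Rπ : X → ℝ) (hRπ : ∀ x, Rπ x = ∑ a, π x a * Rg x a)
    (Pπ : X → X → ℝ) (hPπ : ∀ x x', Pπ x x' = ∑ a, π x a * Pg x a x')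
    -- the PBSM: nonnegative fixed point of the policy-dependent operator
    (dpi : X → X → ℝ)
    (hnonneg : ∀ x y, 0 ≤ dpi x y)
    (hfix : ∀ x₁ x₂ : X, dpi x₁ x₂ =
      cR * |Rπ x₁ - Rπ x₂| + cT * W1 dpi (Pπ x₁) (Pπ x₂)) :
    ∀ x xp : X, (enc x).1 = (enc xp).1 → dpi x xp = 0 :=
  pbsm_exo_free_denoising_general ps pξ q R enc hps0 hps1 hpξ0 hpξ1 hq0 hq1 hblock cR cT hcT0 hcT1
    Rg hRg Pg hPg π hπ0 hπ1 hexofree Rπ hRπ Pπ hPπ dpi hnonneg hfix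
end

section
/- The operator F on pseudometrics over a finite set X, defined by F(d)(x₁,x₂) = c_R·|R(x₁) − R(x₂)| + c_T·E_{x₁'∼P(·|x₁), x₂'∼P(·|x₂)}[d(x₁',x₂')] (the MICo operator with independent coupling), is a contraction of modulus c_T with respect to the supremum norm on bounded symmetric nonnegative functions, provided 0 ≤ c_T < 1. Hence it has a unique fixed point uᵖⁱ. -/
/-!
The independent coupling `d ↦ ∑ x', P x x' * ∑ y', P y y' * d x' y'` is an average of the values
of `d` with respect to the probability weights `P x ⊗ P y`, so it preserves nonnegativity
and symmetry and does not increase sup-distances. The MICo operator adds a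
nonnegative symmetric reward term to `cT` times this average, so it is a `cT`-contraction
for the sup metric on `X → X → ℝ` that maps the closed set of nonnegative symmetric
functions into itself; Banach's fixed point theorem on that set gives the unique fixed point.
-/

open Finset Function Set

theorem abs_sum_mul_le_of_sum_eq_one {ι : Type*} [Fintype ι] {w f : ι → ℝ} {M : ℝ}
    (hw0 : ∀ i, 0 ≤ w i) (hw1 : ∑ i, w i = 1) (hf : ∀ i, |f i| ≤ M) :
    |∑ i, w i * f i| ≤ M :=
  calc |∑ i, w i * f i| ≤ ∑ i, |w i * f i| := abs_sum_le_sum_abs _ _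
    _ ≤ ∑ i, w i * M := by
        gcongr with i
        rw [abs_mul, abs_of_nonneg (hw0 i)]
        exact mul_le_mul_of_nonneg_left (hf i) (hw0 i)
    _ = M := by rw [← sum_mul, hw1, one_mul]

theorem ContractingWith.exists_isFixedPt_mem {α : Type*} [MetricSpace α] [CompleteSpace α]
    {K : NNReal} {f : α → α} (hf : ContractingWith K f) {s : Set α} (hs : IsClosed s)
    (hne : s.Nonempty) (hsf : MapsTo f s s) : ∃ y ∈ s, IsFixedPt f y := by
  obtain ⟨x, hx⟩ := hne
  obtain ⟨y, hys, hy, -⟩ :=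
    (hf.restrict hsf).exists_fixedPoint' hs.isComplete hsf hx (edist_ne_top _ _)
  exact ⟨y, hys, hy⟩

section IndepCoupling

variable {X : Type*} [Fintype X] {P : X → X → ℝ}

/-- The expectation of `d` under the independent coupling of `P x` and `P y`. -/
def indepCouplingExpect (P : X → X → ℝ) (d : X → X → ℝ) (x y : X) : ℝ :=
  ∑ x', P x x' * ∑ y', P y y' * d x' y'

theorem indepCouplingExpect_sub (d₁ d₂ : X → X → ℝ) (x y : X) :
    indepCouplingExpect P (d₁ - d₂) x y =
      indepCouplingExpect P d₁ x y - indepCouplingExpect P d₂ x y := by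
  simp only [indepCouplingExpect, Pi.sub_apply, mul_sub, sum_sub_distrib]

theorem abs_indepCouplingExpect_le (hP0 : ∀ x x', 0 ≤ P x x') (hP1 : ∀ x, ∑ x', P x x' = 1)
    {d : X → X → ℝ} {M : ℝ} (hd : ∀ x y, |d x y| ≤ M) (x y : X) :
    |indepCouplingExpect P d x y| ≤ M :=
  abs_sum_mul_le_of_sum_eq_one (hP0 x) (hP1 x) fun x' ↦
    abs_sum_mul_le_of_sum_eq_one (hP0 y) (hP1 y) (hd x')

theorem indepCouplingExpect_nonneg (hP0 : ∀ x x', 0 ≤ P x x') {d : X → X → ℝ}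
    (hd : ∀ x y, 0 ≤ d x y) (x y : X) : 0 ≤ indepCouplingExpect P d x y :=
  sum_nonneg fun x' _ ↦ mul_nonneg (hP0 x x') <|
    sum_nonneg fun y' _ ↦ mul_nonneg (hP0 y y') (hd x' y')

theorem indepCouplingExpect_swap (d : X → X → ℝ) (x y : X) :
    indepCouplingExpect P (swap d) x y = indepCouplingExpect P d y x := by
  simp only [indepCouplingExpect, swap, mul_sum]
  rw [sum_comm]
  exact sum_congr rfl fun _ _ ↦ sum_congr rfl fun _ _ ↦ by ring

end IndepCoupling

def nonnegSymm (X : Type*) : Set (X → X → ℝ) :=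
  {d | (∀ x y, 0 ≤ d x y) ∧ ∀ x y, d x y = d y x}

theorem isClosed_nonnegSymm (X : Type*) : IsClosed (nonnegSymm X) := by
  simp only [nonnegSymm, ofPred_and, ofPred_forall]
  exact (isClosed_iInter fun x ↦ isClosed_iInter fun y ↦
      isClosed_le (by fun_prop) (by fun_prop)).inter
    (isClosed_iInter fun x ↦ isClosed_iInter fun y ↦ isClosed_eq (by fun_prop) (by fun_prop))

section MICo

variable {X : Type*} [Fintype X] {R : X → ℝ} {P : X → X → ℝ} {cR cT : ℝ}

def micoOperator (R : X → ℝ) (P : X → X → ℝ) (cR cT : ℝ) (d : X → X → ℝ) (x y : X) : ℝ :=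
  cR * |R x - R y| + cT * indepCouplingExpect P d x y

theorem abs_micoOperator_sub_le (hP0 : ∀ x x', 0 ≤ P x x') (hP1 : ∀ x, ∑ x', P x x' = 1)
    (hcT0 : 0 ≤ cT) {d₁ d₂ : X → X → ℝ} {M : ℝ} (hd : ∀ x y, |d₁ x y - d₂ x y| ≤ M)
    (x y : X) : |micoOperator R P cR cT d₁ x y - micoOperator R P cR cT d₂ x y| ≤ cT * M := by
  have hdiff : micoOperator R P cR cT d₁ x y - micoOperator R P cR cT d₂ x y =
      cT * indepCouplingExpect P (d₁ - d₂) x y := by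
    rw [micoOperator, micoOperator, indepCouplingExpect_sub]
    ring
  rw [hdiff, abs_mul, abs_of_nonneg hcT0]
  exact mul_le_mul_of_nonneg_left (abs_indepCouplingExpect_le hP0 hP1 hd x y) hcT0

theorem micoOperator_contractingWith (hP0 : ∀ x x', 0 ≤ P x x') (hP1 : ∀ x, ∑ x', P x x' = 1)
    (hcT0 : 0 ≤ cT) (hcT1 : cT < 1) :
    ContractingWith ⟨cT, hcT0⟩ (micoOperator R P cR cT) := by
  refine ⟨hcT1, LipschitzWith.of_dist_le_mul fun d₁ d₂ ↦ ?_⟩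
  have hd : ∀ x y, |d₁ x y - d₂ x y| ≤ dist d₁ d₂ := fun x y ↦
    (dist_le_pi_dist (d₁ x) (d₂ x) y).trans (dist_le_pi_dist d₁ d₂ x)
  have hcM : 0 ≤ cT * dist d₁ d₂ := mul_nonneg hcT0 dist_nonneg
  refine (dist_pi_le_iff hcM).2 fun x ↦ (dist_pi_le_iff hcM).2 fun y ↦ ?_
  exact abs_micoOperator_sub_le hP0 hP1 hcT0 hd x y

theorem micoOperator_mapsTo_nonnegSymm (hP0 : ∀ x x', 0 ≤ P x x') (hcR : 0 ≤ cR)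
    (hcT0 : 0 ≤ cT) : MapsTo (micoOperator R P cR cT) (nonnegSymm X) (nonnegSymm X) := by
  rintro d ⟨hd0, hdsymm⟩
  refine ⟨fun x y ↦ ?_, fun x y ↦ ?_⟩
  · exact add_nonneg (mul_nonneg hcR (abs_nonneg _))
      (mul_nonneg hcT0 (indepCouplingExpect_nonneg hP0 hd0 x y))
  · have hswap : swap d = d := funext₂ fun x y ↦ hdsymm y x
    rw [micoOperator, micoOperator, abs_sub_comm, ← indepCouplingExpect_swap, hswap]

end MICo

/-- the MICo operator with independent coupling is a contraction of
modulus `cT` with respect to the supremum norm, and hence has a unique fixed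
point among nonnegative symmetric functions. -/
theorem mico_operator_contraction
    {X : Type*} [Fintype X]
    (R : X → ℝ) (P : X → X → ℝ)
    (hP0 : ∀ x x', 0 ≤ P x x') (hP1 : ∀ x, ∑ x', P x x' = 1)
    (cR cT : ℝ) (hcR : 0 ≤ cR) (hcT0 : 0 ≤ cT) (hcT1 : cT < 1)
    (F : (X → X → ℝ) → (X → X → ℝ))
    (hF : ∀ d x₁ x₂, F d x₁ x₂ =
      cR * |R x₁ - R x₂| + cT * ∑ x₁', ∑ x₂', P x₁ x₁' * P x₂ x₂' * d x₁' x₂') :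
    -- contraction of modulus cT in the supremum norm on bounded symmetric
    -- nonnegative functions
    (∀ d₁ d₂ : X → X → ℝ,
      (∀ x y, 0 ≤ d₁ x y) → (∀ x y, d₁ x y = d₁ y x) →
      (∀ x y, 0 ≤ d₂ x y) → (∀ x y, d₂ x y = d₂ y x) →
      ∀ M : ℝ, (∀ x y, |d₁ x y - d₂ x y| ≤ M) →
        ∀ x y, |F d₁ x y - F d₂ x y| ≤ cT * M) ∧
    -- hence there is a unique fixed point uᵖⁱ (nonnegative and symmetric)
    (∃! u : X → X → ℝ,
      (∀ x y, 0 ≤ u x y) ∧ (∀ x y, u x y = u y x) ∧ (∀ x y, u x y = F u x y)) := by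
  obtain rfl : F = micoOperator R P cR cT := funext fun d ↦ funext₂ fun x y ↦ by
    simp only [hF, micoOperator, indepCouplingExpect, mul_sum, mul_assoc]
  have hcontr := micoOperator_contractingWith (R := R) (cR := cR) hP0 hP1 hcT0 hcT1
  refine ⟨fun d₁ d₂ _ _ _ _ M hM ↦ abs_micoOperator_sub_le hP0 hP1 hcT0 hM, ?_⟩
  obtain ⟨u, ⟨hu0, husymm⟩, hu⟩ := hcontr.exists_isFixedPt_mem (isClosed_nonnegSymm X)
    ⟨0, fun _ _ ↦ le_rfl, fun _ _ ↦ rfl⟩ (micoOperator_mapsTo_nonnegSymm hP0 hcR hcT0)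
  refine ⟨u, ⟨hu0, husymm, fun x y ↦ (congrFun₂ hu x y).symm⟩, ?_⟩
  rintro v ⟨-, -, hv⟩
  exact hcontr.fixedPoint_unique' (funext₂ fun x y ↦ (hv x y).symm) hu
end

section
/- The MICo fixed point uᵖⁱ (the unique fixed point of d ↦ c_R·|R(x₁) − R(x₂)| + c_T·E_{x₁'∼P(·|x₁), x₂'∼P(·|x₂)}[d(x₁',x₂')]) is a diffuse metric: it is nonnegative, symmetric, and satisfies the triangle inequality uᵖⁱ(x,z) ≤ uᵖⁱ(x,y) + uᵖⁱ(y,z) for all x,y,z, though uᵖⁱ(x,x) may be nonzero. -/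
/-!
Each of the three properties is a maximum principle for a "defect" function on a finite set of
tuples of states: nonnegativity for `-u x y`, symmetry for `u x y - u y x`, the triangle inequality
for `u x z - u x y - u y z`. Coupling the tuple's coordinates by independent transitions, the fixed
point equation bounds each defect by `c_T` times its own average, and the reward term has the right
sign because `|·|` is nonnegative, symmetric and subadditive. At a maximising tuple the defect `M`
then satisfies `M ≤ c_T M`, so `M ≤ 0` since `c_T < 1`.
-/

open Finset

section Stochastic

variable {ι κ : Type*} [Fintype ι] [Fintype κ]

structure IsStochastic (W : ι → ι → ℝ) : Prop where
  nonneg : ∀ i j, 0 ≤ W i j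
  sum_eq_one : ∀ i, ∑ j, W i j = 1

namespace IsStochastic

variable {W : ι → ι → ℝ}

lemma sum_mul_le (hW : IsStochastic W) {f : ι → ℝ} {M : ℝ} (hf : ∀ j, f j ≤ M) (i : ι) :
    ∑ j, W i j * f j ≤ M :=
  calc ∑ j, W i j * f j ≤ ∑ j, W i j * M :=
        sum_le_sum fun j _ => mul_le_mul_of_nonneg_left (hf j) (hW.nonneg i j)
    _ = M := by rw [← sum_mul, hW.sum_eq_one, one_mul]

theorem nonpos_of_le_mul_sum (hW : IsStochastic W) {c : ℝ} (hc0 : 0 ≤ c) (hc1 : c < 1)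
    {f : ι → ℝ} (hf : ∀ i, f i ≤ c * ∑ j, W i j * f j) (i : ι) : f i ≤ 0 := by
  have : Nonempty ι := ⟨i⟩
  obtain ⟨i₀, hi₀⟩ := Finite.exists_max f
  have hmax : f i₀ ≤ c * f i₀ :=
    (hf i₀).trans (mul_le_mul_of_nonneg_left (hW.sum_mul_le hi₀ i₀) hc0)
  have hmax_nonpos : f i₀ ≤ 0 := by nlinarith
  exact (hi₀ i).trans hmax_nonpos

protected lemma prod {P : ι → ι → ℝ} {Q : κ → κ → ℝ} (hP : IsStochastic P)
    (hQ : IsStochastic Q) : IsStochastic fun i j : ι × κ => P i.1 j.1 * Q i.2 j.2 where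
  nonneg i j := mul_nonneg (hP.nonneg _ _) (hQ.nonneg _ _)
  sum_eq_one i := by
    rw [Fintype.sum_prod_type, ← sum_mul_sum, hP.sum_eq_one, hQ.sum_eq_one, one_mul]

end IsStochastic

end Stochastic

section MICo

variable {X : Type*} [Fintype X] {R : X → ℝ} {P : X → X → ℝ} {cR cT : ℝ} {u : X → X → ℝ}

def IsMICoFixedPoint (R : X → ℝ) (P : X → X → ℝ) (cR cT : ℝ) (u : X → X → ℝ) : Prop :=
  ∀ x₁ x₂ : X, u x₁ x₂ =
    cR * |R x₁ - R x₂| + cT * ∑ x₁', ∑ x₂', P x₁ x₁' * P x₂ x₂' * u x₁' x₂'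

lemma sum_sum_sum_mul_triangle_defect (hP : IsStochastic P) (g : X → X → ℝ) (x y z : X) :
    ∑ a, ∑ b, ∑ c, P x a * (P y b * P z c) * (g a c - g a b - g b c) =
      ∑ a, ∑ c, P x a * P z c * g a c - ∑ a, ∑ b, P x a * P y b * g a b -
        ∑ b, ∑ c, P y b * P z c * g b c := by
  have hP1 := hP.sum_eq_one
  have hac : ∑ a, ∑ b, ∑ c, P x a * (P y b * P z c) * g a c =
      ∑ a, ∑ c, P x a * P z c * g a c := by
    simp only [mul_left_comm (P x _) (P y _), mul_assoc, ← mul_sum, ← sum_mul, hP1, one_mul]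
  have hab : ∑ a, ∑ b, ∑ c, P x a * (P y b * P z c) * g a b =
      ∑ a, ∑ b, P x a * P y b * g a b := by
    simp only [← mul_assoc, mul_right_comm _ (P z _), ← mul_sum, hP1, mul_one]
  have hbc : ∑ a, ∑ b, ∑ c, P x a * (P y b * P z c) * g b c =
      ∑ b, ∑ c, P y b * P z c * g b c := by
    simp only [mul_assoc, ← mul_sum, ← sum_mul, hP1, one_mul]
  simp only [mul_sub, sum_sub_distrib, hac, hab, hbc]

namespace IsMICoFixedPoint

lemma nonneg (hu : IsMICoFixedPoint R P cR cT u) (hP : IsStochastic P) (hcR : 0 ≤ cR)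
    (hcT0 : 0 ≤ cT) (hcT1 : cT < 1) (x y : X) : 0 ≤ u x y := by
  have hdefect : ∀ p : X × X,
      -u p.1 p.2 ≤ cT * ∑ q : X × X, P p.1 q.1 * P p.2 q.2 * -u q.1 q.2 := by
    rintro ⟨x₁, x₂⟩
    have hreward : 0 ≤ cR * |R x₁ - R x₂| := mul_nonneg hcR (abs_nonneg _)
    simp only [Fintype.sum_prod_type, mul_neg, sum_neg_distrib]
    linarith [hu x₁ x₂]
  simpa using (hP.prod hP).nonpos_of_le_mul_sum hcT0 hcT1 hdefect (x, y)

lemma symm (hu : IsMICoFixedPoint R P cR cT u) (hP : IsStochastic P) (hcT0 : 0 ≤ cT)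
    (hcT1 : cT < 1) (x y : X) : u x y = u y x := by
  have hdefect : ∀ p : X × X, u p.1 p.2 - u p.2 p.1 ≤
      cT * ∑ q : X × X, P p.1 q.1 * P p.2 q.2 * (u q.1 q.2 - u q.2 q.1) := by
    rintro ⟨x₁, x₂⟩
    have hswap : ∑ a, ∑ b, P x₂ a * P x₁ b * u a b = ∑ a, ∑ b, P x₁ a * P x₂ b * u b a := by
      rw [sum_comm]
      simp only [mul_comm (P x₂ _)]
    have hyx := hu x₂ x₁
    rw [hswap, abs_sub_comm] at hyx
    simp only [Fintype.sum_prod_type, mul_sub, sum_sub_distrib]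
    linarith [hu x₁ x₂]
  have hle : ∀ x y, u x y ≤ u y x := fun x y =>
    sub_nonpos.mp ((hP.prod hP).nonpos_of_le_mul_sum hcT0 hcT1 hdefect (x, y))
  exact (hle x y).antisymm (hle y x)

lemma triangle (hu : IsMICoFixedPoint R P cR cT u) (hP : IsStochastic P) (hcR : 0 ≤ cR)
    (hcT0 : 0 ≤ cT) (hcT1 : cT < 1) (x y z : X) : u x z ≤ u x y + u y z := by
  have hdefect : ∀ t : X × X × X, u t.1 t.2.2 - u t.1 t.2.1 - u t.2.1 t.2.2 ≤
      cT * ∑ s : X × X × X, P t.1 s.1 * (P t.2.1 s.2.1 * P t.2.2 s.2.2) *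
        (u s.1 s.2.2 - u s.1 s.2.1 - u s.2.1 s.2.2) := by
    rintro ⟨x₁, x₂, x₃⟩
    have hreward : cR * |R x₁ - R x₃| ≤ cR * |R x₁ - R x₂| + cR * |R x₂ - R x₃| := by
      rw [← mul_add]
      exact mul_le_mul_of_nonneg_left (abs_sub_le _ _ _) hcR
    simp only [Fintype.sum_prod_type, sum_sum_sum_mul_triangle_defect hP]
    linarith [hu x₁ x₃, hu x₁ x₂, hu x₂ x₃]
  have hdefect_nonpos := (hP.prod (hP.prod hP)).nonpos_of_le_mul_sum hcT0 hcT1 hdefect (x, y, z)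
  linarith

end IsMICoFixedPoint

end MICo

/-- the MICo fixed point is a diffuse metric: nonnegative,
symmetric, and satisfying the triangle inequality (without requiring zero
self-distances). -/
theorem mico_fixed_point_is_diffuse_metric
    {X : Type*} [Fintype X]
    (R : X → ℝ) (P : X → X → ℝ)
    (hP0 : ∀ x x', 0 ≤ P x x') (hP1 : ∀ x, ∑ x', P x x' = 1)
    (cR cT : ℝ) (hcR : 0 ≤ cR) (hcT0 : 0 ≤ cT) (hcT1 : cT < 1)
    (u : X → X → ℝ)
    (hfix : ∀ x₁ x₂ : X, u x₁ x₂ =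
      cR * |R x₁ - R x₂| + cT * ∑ x₁', ∑ x₂', P x₁ x₁' * P x₂ x₂' * u x₁' x₂') :
    (∀ x y : X, 0 ≤ u x y) ∧
    (∀ x y : X, u x y = u y x) ∧
    (∀ x y z : X, u x z ≤ u x y + u y z) := by
  have hP : IsStochastic P := ⟨hP0, hP1⟩
  have hu : IsMICoFixedPoint R P cR cT u := hfix
  exact ⟨hu.nonneg hP hcR hcT0 hcT1, hu.symm hP hcT0 hcT1, hu.triangle hP hcR hcT0 hcT1⟩
end
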